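/- The Jacobian of the Salmon D2Q9 equilibrium map is a projection matrix: for all real g, all e > 0, all h ∈ ℝ and u = (u₁,u₂) ∈ ℝ², the 9×9 real matrix M with entries M_{0j} = 1 − 5gh/(3e²) − 4(ξ_j·u)/(3e²) + 2|u|²/(3e²); M_{ij} = gh/(3e²) + (ξ_i·ξ_j)/(3e²) + (ξ_i·ξ_j)(ξ_i·u)/e⁴ − (ξ_i·u)²/(2e⁴) − (ξ_j·u)/(3e²) + |u|²/(6e²) for 1 ≤ i ≤ 4; M_{ij} = gh/(12e²) + (ξ_i·ξ_j)/(12e²) + (ξ_i·ξ_j)(ξ_i·u)/(4e⁴) − (ξ_i·u)²/(8e⁴) − (ξ_j·u)/(12e²) + |u|²/(24e²) for 5 ≤ i ≤ 8 (j = 0,…,8 throughout), satisfies M² = M. -/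

import Mathlib

/-- Dot product on `ℝ × ℝ`. -/
def pdot (a b : ℝ × ℝ) : ℝ := a.1 * b.1 + a.2 * b.2

/-- The D2Q9 lattice velocities with lattice speed `e`. -/
def xi9 (e : ℝ) : Fin 9 → ℝ × ℝ :=
  ![(0, 0), (e, 0), (0, e), (-e, 0), (0, -e), (e, e), (-e, e), (-e, -e), (e, -e)]

/-- The Jacobian `∂f_i^eq/∂f_j` of the Salmon D2Q9 equilibrium map. -/
noncomputable def MS (g e h : ℝ) (u : ℝ × ℝ) : Matrix (Fin 9) (Fin 9) ℝ :=
  Matrix.of fun i j =>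
    if i = 0 then
      1 - 5 * g * h / (3 * e ^ 2) - 4 * pdot (xi9 e j) u / (3 * e ^ 2)
        + 2 * pdot u u / (3 * e ^ 2)
    else if (i : ℕ) ≤ 4 then
      g * h / (3 * e ^ 2) + pdot (xi9 e i) (xi9 e j) / (3 * e ^ 2)
        + pdot (xi9 e i) (xi9 e j) * pdot (xi9 e i) u / e ^ 4
        - pdot (xi9 e i) u ^ 2 / (2 * e ^ 4)
        - pdot (xi9 e j) u / (3 * e ^ 2) + pdot u u / (6 * e ^ 2)
    else
      g * h / (12 * e ^ 2) + pdot (xi9 e i) (xi9 e j) / (12 * e ^ 2)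
        + pdot (xi9 e i) (xi9 e j) * pdot (xi9 e i) u / (4 * e ^ 4)
        - pdot (xi9 e i) u ^ 2 / (8 * e ^ 4)
        - pdot (xi9 e j) u / (12 * e ^ 2) + pdot u u / (24 * e ^ 2)


private lemma row0 (c v1 v2 : ℝ) (j : Fin 9) :
    MS c 1 1 (v1, v2) 0 j =
      1 - 5 * c / 3 - 4 * ((xi9 1 j).1 * v1 + (xi9 1 j).2 * v2) / 3
        + 2 * (v1 * v1 + v2 * v2) / 3 := by
  simp [MS, pdot]

private lemma row1 (c v1 v2 : ℝ) (j : Fin 9) :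
    MS c 1 1 (v1, v2) 1 j =
      c / 3 + ((1) * (xi9 1 j).1 + (0) * (xi9 1 j).2) / 3
        + ((1) * (xi9 1 j).1 + (0) * (xi9 1 j).2) * ((1) * v1 + (0) * v2) / 1
        - ((1) * v1 + (0) * v2) ^ 2 / (2)
        - ((xi9 1 j).1 * v1 + (xi9 1 j).2 * v2) / 3 + (v1 * v1 + v2 * v2) / (3 * 2) := by
  have hx : xi9 1 (1 : Fin 9) = ((1 : ℝ), (0 : ℝ)) := rfl
  have hv : (((1 : Fin 9)) : ℕ) = 1 := rfl
  simp [MS, pdot, hx, hv]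
  ring

private lemma row2 (c v1 v2 : ℝ) (j : Fin 9) :
    MS c 1 1 (v1, v2) 2 j =
      c / 3 + ((0) * (xi9 1 j).1 + (1) * (xi9 1 j).2) / 3
        + ((0) * (xi9 1 j).1 + (1) * (xi9 1 j).2) * ((0) * v1 + (1) * v2) / 1
        - ((0) * v1 + (1) * v2) ^ 2 / (2)
        - ((xi9 1 j).1 * v1 + (xi9 1 j).2 * v2) / 3 + (v1 * v1 + v2 * v2) / (3 * 2) := by
  have hx : xi9 1 (2 : Fin 9) = ((0 : ℝ), (1 : ℝ)) := rfl
  have hv : (((2 : Fin 9)) : ℕ) = 2 := rfl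
  simp [MS, pdot, hx, hv]
  ring

private lemma row3 (c v1 v2 : ℝ) (j : Fin 9) :
    MS c 1 1 (v1, v2) 3 j =
      c / 3 + ((-1) * (xi9 1 j).1 + (0) * (xi9 1 j).2) / 3
        + ((-1) * (xi9 1 j).1 + (0) * (xi9 1 j).2) * ((-1) * v1 + (0) * v2) / 1
        - ((-1) * v1 + (0) * v2) ^ 2 / (2)
        - ((xi9 1 j).1 * v1 + (xi9 1 j).2 * v2) / 3 + (v1 * v1 + v2 * v2) / (3 * 2) := by
  have hx : xi9 1 (3 : Fin 9) = ((-1 : ℝ), (0 : ℝ)) := rfl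
  have hv : (((3 : Fin 9)) : ℕ) = 3 := rfl
  simp [MS, pdot, hx, hv]
  ring

private lemma row4 (c v1 v2 : ℝ) (j : Fin 9) :
    MS c 1 1 (v1, v2) 4 j =
      c / 3 + ((0) * (xi9 1 j).1 + (-1) * (xi9 1 j).2) / 3
        + ((0) * (xi9 1 j).1 + (-1) * (xi9 1 j).2) * ((0) * v1 + (-1) * v2) / 1
        - ((0) * v1 + (-1) * v2) ^ 2 / (2)
        - ((xi9 1 j).1 * v1 + (xi9 1 j).2 * v2) / 3 + (v1 * v1 + v2 * v2) / (3 * 2) := by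
  have hx : xi9 1 (4 : Fin 9) = ((0 : ℝ), (-1 : ℝ)) := rfl
  have hv : (((4 : Fin 9)) : ℕ) = 4 := rfl
  simp [MS, pdot, hx, hv]
  ring

private lemma row5 (c v1 v2 : ℝ) (j : Fin 9) :
    MS c 1 1 (v1, v2) 5 j =
      c / 12 + ((1) * (xi9 1 j).1 + (1) * (xi9 1 j).2) / 12
        + ((1) * (xi9 1 j).1 + (1) * (xi9 1 j).2) * ((1) * v1 + (1) * v2) / 4
        - ((1) * v1 + (1) * v2) ^ 2 / (8)
        - ((xi9 1 j).1 * v1 + (xi9 1 j).2 * v2) / 12 + (v1 * v1 + v2 * v2) / (12 * 2) := by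
  have hx : xi9 1 (5 : Fin 9) = ((1 : ℝ), (1 : ℝ)) := rfl
  have hv : (((5 : Fin 9)) : ℕ) = 5 := rfl
  simp [MS, pdot, hx, hv]
  ring

private lemma row6 (c v1 v2 : ℝ) (j : Fin 9) :
    MS c 1 1 (v1, v2) 6 j =
      c / 12 + ((-1) * (xi9 1 j).1 + (1) * (xi9 1 j).2) / 12
        + ((-1) * (xi9 1 j).1 + (1) * (xi9 1 j).2) * ((-1) * v1 + (1) * v2) / 4
        - ((-1) * v1 + (1) * v2) ^ 2 / (8)
        - ((xi9 1 j).1 * v1 + (xi9 1 j).2 * v2) / 12 + (v1 * v1 + v2 * v2) / (12 * 2) := by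
  have hx : xi9 1 (6 : Fin 9) = ((-1 : ℝ), (1 : ℝ)) := rfl
  have hv : (((6 : Fin 9)) : ℕ) = 6 := rfl
  simp [MS, pdot, hx, hv]
  ring

private lemma row7 (c v1 v2 : ℝ) (j : Fin 9) :
    MS c 1 1 (v1, v2) 7 j =
      c / 12 + ((-1) * (xi9 1 j).1 + (-1) * (xi9 1 j).2) / 12
        + ((-1) * (xi9 1 j).1 + (-1) * (xi9 1 j).2) * ((-1) * v1 + (-1) * v2) / 4
        - ((-1) * v1 + (-1) * v2) ^ 2 / (8)
        - ((xi9 1 j).1 * v1 + (xi9 1 j).2 * v2) / 12 + (v1 * v1 + v2 * v2) / (12 * 2) := by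
  have hx : xi9 1 (7 : Fin 9) = ((-1 : ℝ), (-1 : ℝ)) := rfl
  have hv : (((7 : Fin 9)) : ℕ) = 7 := rfl
  simp [MS, pdot, hx, hv]
  ring

private lemma row8 (c v1 v2 : ℝ) (j : Fin 9) :
    MS c 1 1 (v1, v2) 8 j =
      c / 12 + ((1) * (xi9 1 j).1 + (-1) * (xi9 1 j).2) / 12
        + ((1) * (xi9 1 j).1 + (-1) * (xi9 1 j).2) * ((1) * v1 + (-1) * v2) / 4
        - ((1) * v1 + (-1) * v2) ^ 2 / (8)
        - ((xi9 1 j).1 * v1 + (xi9 1 j).2 * v2) / 12 + (v1 * v1 + v2 * v2) / (12 * 2) := by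
  have hx : xi9 1 (8 : Fin 9) = ((1 : ℝ), (-1 : ℝ)) := rfl
  have hv : (((8 : Fin 9)) : ℕ) = 8 := rfl
  simp [MS, pdot, hx, hv]
  ring

private lemma MS_one_proj (c v1 v2 : ℝ) :
    MS c 1 1 (v1, v2) * MS c 1 1 (v1, v2) = MS c 1 1 (v1, v2) := by
  ext i j
  rw [Matrix.mul_apply, show (Finset.univ : Finset (Fin 9)) = {0,1,2,3,4,5,6,7,8} by decide,
    Finset.sum_insert (by decide), Finset.sum_insert (by decide), Finset.sum_insert (by decide),
    Finset.sum_insert (by decide), Finset.sum_insert (by decide), Finset.sum_insert (by decide),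
    Finset.sum_insert (by decide), Finset.sum_insert (by decide), Finset.sum_singleton]
  have x0 : xi9 1 (0 : Fin 9) = ((0:ℝ), (0:ℝ)) := rfl
  have x1 : xi9 1 (1 : Fin 9) = ((1:ℝ), (0:ℝ)) := rfl
  have x2 : xi9 1 (2 : Fin 9) = ((0:ℝ), (1:ℝ)) := rfl
  have x3 : xi9 1 (3 : Fin 9) = ((-1:ℝ), (0:ℝ)) := rfl
  have x4 : xi9 1 (4 : Fin 9) = ((0:ℝ), (-1:ℝ)) := rfl
  have x5 : xi9 1 (5 : Fin 9) = ((1:ℝ), (1:ℝ)) := rfl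
  have x6 : xi9 1 (6 : Fin 9) = ((-1:ℝ), (1:ℝ)) := rfl
  have x7 : xi9 1 (7 : Fin 9) = ((-1:ℝ), (-1:ℝ)) := rfl
  have x8 : xi9 1 (8 : Fin 9) = ((1:ℝ), (-1:ℝ)) := rfl
  fin_cases i <;>
    · simp only [Fin.reduceFinMk, Fin.mk_zero, Fin.mk_one, Fin.isValue, row0, row1, row2, row3, row4, row5, row6, row7, row8,
        x0, x1, x2, x3, x4, x5, x6, x7, x8]
      ring

private lemma xi9_smul (e : ℝ) (i : Fin 9) :
    xi9 e i = (e * (xi9 1 i).1, e * (xi9 1 i).2) := by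
  fin_cases i <;> · show _ = (e * (Prod.fst _), e * (Prod.snd _)); norm_num [xi9, Prod.ext_iff]

private lemma MS_scale (g e h : ℝ) (he : e ≠ 0) (v1 v2 : ℝ) :
    MS g e h (e * v1, e * v2) = MS (g * h / e ^ 2) 1 1 (v1, v2) := by
  ext i j
  simp only [MS, Matrix.of_apply]
  rw [xi9_smul e i, xi9_smul e j]
  split_ifs <;> (simp only [pdot]; field_simp <;> ring)

theorem d2q9_salmon_jacobian_projection (g e h : ℝ) (he : 0 < e) (u : ℝ × ℝ) :
    MS g e h u * MS g e h u = MS g e h u := by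
  have he0 : e ≠ 0 := he.ne'
  obtain ⟨u1, u2⟩ := u
  have hu : (u1, u2) = (e * (u1 / e), e * (u2 / e)) := by field_simp
  rw [hu, MS_scale g e h he0, MS_one_proj]
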